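/- For every real δ > 0 there exists q₀ such that for all integers q ≥ q₀ and all integers b with b ≥ (1+δ)·q·log q, the reconstruction problem for the b-ary tree T_b and the q-coloring channel (the q-state channel with M_{i,i} = 0 and M_{i,j} = 1/(q−1) for i ≠ j) is solvable. -/

import Mathlib

/-!
Call a level-`n` configuration *determining* for a color `j` if it has probability zero under
every root color other than `j`. Because the channel has zero diagonal, a configuration at level
`n + 1` determines the root color `i` as soon as, for every `j ≠ i`, some subtree of the root
determines `j`. Given the colors of the root's children the `b` subtrees are independent, so if
at level `n` every color is determined with probability at least `p`, a union bound over `j ≠ i`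
shows that level `n + 1` determines `i` with probability at least
`1 - (q - 1) (1 - p / (q - 1)) ^ b ≥ 1 - q e ^ {-b p / q}`. For `b ≥ (1 + δ) q log q`,
`p = (1 + δ / 2) / (1 + δ)` and `q` large this is again at least `p`, so the root is determined
with probability at least `p` at every level. This forces `D_V(P_n^i, P_n^j) ≥ p / 2`, and since
`D_V(P_n^i, P_n^j)` is nonincreasing in `n` it converges to a positive limit.
-/

open Filter

/-- The distribution of the configuration at level `n` of the `b`-ary tree,
for the broadcast process with channel `M`, given that the root has value `i`.
Vertices at level `n` are encoded as paths `Fin n → Fin b`. -/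
noncomputable def levelDist {A : Type} [Fintype A] [DecidableEq A]
    (M : A → A → ℝ) (b : ℕ) (i : A) : (n : ℕ) → ((Fin n → Fin b) → A) → ℝ
  | 0 => fun σ => if σ = (fun _ => i) then 1 else 0
  | n + 1 => fun τ => ∑ σ : (Fin n → Fin b) → A, levelDist M b i n σ *
      ∏ w : Fin (n + 1) → Fin b, M (σ fun m => w m.castSucc) (τ w)

/-- Total variation distance between two (densities of) probability measures
on a finite set. -/
noncomputable def tvDist {Ω : Type*} [Fintype Ω] (P Q : Ω → ℝ) : ℝ :=
  (1 / 2) * ∑ σ, |P σ - Q σ|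

/-- The `q`-coloring channel: `M i i = 0` and `M i j = 1/(q-1)` for `i ≠ j`. -/
noncomputable def coloring (q : ℕ) : Fin q → Fin q → ℝ :=
  fun i j => if i = j then 0 else ((q : ℝ) - 1)⁻¹

open Finset

lemma sum_biUnion_le_sum_sum {ι α : Type*} [DecidableEq α] {f : α → ℝ} (hf : ∀ x, 0 ≤ f x)
    (s : Finset ι) (t : ι → Finset α) :
    ∑ x ∈ s.biUnion t, f x ≤ ∑ i ∈ s, ∑ x ∈ t i, f x := by
  classical
  induction s using Finset.induction_on with
  | empty => simp
  | insert a s ha ih =>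
    rw [biUnion_insert, sum_insert ha]
    have : 0 ≤ ∑ x ∈ t a ∩ s.biUnion t, f x := sum_nonneg fun x _ => hf x
    linarith [sum_union_inter (s₁ := t a) (s₂ := s.biUnion t) (f := f)]

lemma tvDist_nonneg {Ω : Type*} [Fintype Ω] (P Q : Ω → ℝ) : 0 ≤ tvDist P Q := by
  unfold tvDist
  positivity

lemma sum_sum_mul_of_sum_eq_one {α β : Type*} [Fintype α] [Fintype β] (μ : α → ℝ) {K : α → β → ℝ}
    (hK : ∀ a, ∑ y, K a y = 1) : ∑ y, ∑ a, μ a * K a y = ∑ a, μ a := by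
  rw [sum_comm]
  simp [← mul_sum, hK]

lemma tvDist_sum_mul_le {α β : Type*} [Fintype α] [Fintype β] (μ ν : α → ℝ) {K : α → β → ℝ}
    (hK₀ : ∀ a y, 0 ≤ K a y) (hK₁ : ∀ a, ∑ y, K a y = 1) :
    tvDist (fun y => ∑ a, μ a * K a y) (fun y => ∑ a, ν a * K a y) ≤ tvDist μ ν := by
  unfold tvDist
  gcongr
  calc ∑ y, |∑ a, μ a * K a y - ∑ a, ν a * K a y|
      = ∑ y, |∑ a, (μ a - ν a) * K a y| := by simp_rw [sub_mul, sum_sub_distrib]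
    _ ≤ ∑ y, ∑ a, |μ a - ν a| * K a y := by
      gcongr with y
      refine (abs_sum_le_sum_abs _ _).trans_eq ?_
      simp_rw [abs_mul, abs_of_nonneg (hK₀ _ _)]
    _ = ∑ a, |μ a - ν a| := sum_sum_mul_of_sum_eq_one _ hK₁

def subtree {A : Type} {b n : ℕ} (τ : (Fin (n + 1) → Fin b) → A) (k : Fin b) :
    (Fin n → Fin b) → A :=
  fun w => τ (Fin.cons k w)

lemma sum_prod_subtree {A : Type} [Fintype A] {b n : ℕ}
    (F : Fin b → ((Fin n → Fin b) → A) → ℝ) :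
    ∑ τ : (Fin (n + 1) → Fin b) → A, ∏ k, F k (subtree τ k) = ∏ k, ∑ ω, F k ω := by
  rw [Fintype.prod_sum]
  exact Fintype.sum_equiv
    (((Fin.consEquiv fun _ => Fin b).arrowCongr (Equiv.refl A)).symm.trans (Equiv.curry _ _ _))
    _ _ fun τ => rfl

lemma prod_fun_fin_succ {b n : ℕ} (f : (Fin (n + 1) → Fin b) → ℝ) :
    ∏ w, f w = ∏ k, ∏ w : Fin n → Fin b, f (Fin.cons k w) := by
  rw [← Fintype.prod_prod_type']
  exact (Fintype.prod_equiv (Fin.consEquiv fun _ => Fin b) _ _ fun _ => rfl).symm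

section Broadcast

variable {A : Type} {M : A → A → ℝ} {b : ℕ}

variable (M b) in
def levelKernel (n : ℕ) (σ : (Fin n → Fin b) → A) (τ : (Fin (n + 1) → Fin b) → A) : ℝ :=
  ∏ w : Fin (n + 1) → Fin b, M (σ fun m => w m.castSucc) (τ w)

lemma levelKernel_succ (n : ℕ) (σ : (Fin (n + 1) → Fin b) → A) (τ : (Fin (n + 2) → Fin b) → A) :
    levelKernel M b (n + 1) σ τ = ∏ k, levelKernel M b n (subtree σ k) (subtree τ k) := by
  unfold levelKernel
  rw [prod_fun_fin_succ]
  congr! with k - w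
  unfold subtree
  congr 1
  funext m
  cases m using Fin.cases <;> simp

lemma levelKernel_nonneg (hM₀ : ∀ a c, 0 ≤ M a c) (n : ℕ) (σ : (Fin n → Fin b) → A)
    (τ : (Fin (n + 1) → Fin b) → A) : 0 ≤ levelKernel M b n σ τ :=
  prod_nonneg fun _ _ => hM₀ _ _

variable [Fintype A]

lemma sum_levelKernel (hM₁ : ∀ a, ∑ c, M a c = 1) (n : ℕ) (σ : (Fin n → Fin b) → A) :
    ∑ τ, levelKernel M b n σ τ = 1 := by
  unfold levelKernel
  rw [← Fintype.prod_sum]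
  simp [hM₁]

variable [DecidableEq A]

lemma levelDist_succ (i : A) (n : ℕ) (τ : (Fin (n + 1) → Fin b) → A) :
    levelDist M b i (n + 1) τ = ∑ σ, levelDist M b i n σ * levelKernel M b n σ τ :=
  rfl

lemma levelDist_nonneg (hM₀ : ∀ a c, 0 ≤ M a c) (i : A) :
    ∀ n (ω : (Fin n → Fin b) → A), 0 ≤ levelDist M b i n ω
  | 0, ω => by rw [levelDist]; positivity
  | n + 1, τ => by
    rw [levelDist_succ]
    exact sum_nonneg fun σ _ =>
      mul_nonneg (levelDist_nonneg hM₀ i n σ) (levelKernel_nonneg hM₀ n σ τ)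

lemma sum_levelDist (hM₁ : ∀ a, ∑ c, M a c = 1) (i : A) :
    ∀ n, ∑ ω : (Fin n → Fin b) → A, levelDist M b i n ω = 1
  | 0 => by simp [levelDist]
  | n + 1 => by
    simp_rw [levelDist_succ]
    rw [sum_sum_mul_of_sum_eq_one _ (sum_levelKernel hM₁ n), sum_levelDist hM₁ i n]

lemma sum_compl_levelDist (hM₁ : ∀ a, ∑ c, M a c = 1) (i : A) (n : ℕ)
    (s : Finset ((Fin n → Fin b) → A)) :
    ∑ ω ∈ sᶜ, levelDist M b i n ω = 1 - ∑ ω ∈ s, levelDist M b i n ω := by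
  rw [← sum_levelDist hM₁ i n, ← sum_add_sum_compl s]
  ring

lemma tvDist_levelDist_succ_le (hM₀ : ∀ a c, 0 ≤ M a c) (hM₁ : ∀ a, ∑ c, M a c = 1)
    (i j : A) (n : ℕ) :
    tvDist (levelDist M b i (n + 1)) (levelDist M b j (n + 1)) ≤
      tvDist (levelDist M b i n) (levelDist M b j n) :=
  tvDist_sum_mul_le _ _ (levelKernel_nonneg hM₀ n) (sum_levelKernel hM₁ n)

lemma levelDist_zero (i : A) (ω : (Fin 0 → Fin b) → A) :
    levelDist M b i 0 ω = if ω default = i then 1 else 0 := by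
  simp only [levelDist, funext_iff, Unique.forall_iff]

lemma levelDist_succ_eq_sum_prod (i : A) :
    ∀ (n : ℕ) (τ : (Fin (n + 1) → Fin b) → A), levelDist M b i (n + 1) τ =
      ∑ c : Fin b → A, (∏ k, M i (c k)) * ∏ k, levelDist M b (c k) n (subtree τ k)
  | 0, τ => by
    calc levelDist M b i 1 τ = levelKernel M b 0 (fun _ => i) τ := by
          simp [levelDist, levelKernel]
      _ = ∏ k, M i (subtree τ k default) := by
          simp only [levelKernel, prod_fun_fin_succ, Fintype.prod_unique, subtree]
      _ = ∏ k, ∑ a, M i a * levelDist M b a 0 (subtree τ k) := by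
          simp [levelDist_zero]
      _ = _ := by
          simp_rw [Fintype.prod_sum, prod_mul_distrib]
  | n + 1, τ => by
    calc levelDist M b i (n + 2) τ
        = ∑ c : Fin b → A, (∏ k, M i (c k)) * ∑ σ : (Fin (n + 1) → Fin b) → A,
            ∏ k, (levelDist M b (c k) n (subtree σ k) *
              levelKernel M b n (subtree σ k) (subtree τ k)) := by
          simp_rw [levelDist_succ i (n + 1), levelDist_succ_eq_sum_prod i n, levelKernel_succ,
            sum_mul, mul_sum, prod_mul_distrib, mul_assoc]
          exact sum_comm
      _ = _ := by
          refine sum_congr rfl fun c _ => congrArg _ ?_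
          exact sum_prod_subtree fun k ω =>
            levelDist M b (c k) n ω * levelKernel M b n ω (subtree τ k)

variable (M b) in
open Classical in
noncomputable def determining (n : ℕ) (j : A) : Finset ((Fin n → Fin b) → A) :=
  univ.filter fun ω => ∀ c ≠ j, levelDist M b c n ω = 0

variable (M b) in
noncomputable def detProb (n : ℕ) (j : A) : ℝ :=
  ∑ ω ∈ determining M b n j, levelDist M b j n ω

lemma mem_determining {n : ℕ} {j : A} {ω : (Fin n → Fin b) → A} :
    ω ∈ determining M b n j ↔ ∀ c ≠ j, levelDist M b c n ω = 0 := by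
  simp [determining]

lemma detProb_zero (j : A) : detProb M b 0 j = 1 := by
  have hconst : (fun _ => j) ∈ determining M b 0 j :=
    mem_determining.2 fun c hc => by simp [levelDist_zero, Ne.symm hc]
  simp only [detProb, levelDist, sum_ite_eq', if_pos hconst]

lemma detProb_le_two_mul_tvDist (hM₀ : ∀ a c, 0 ≤ M a c) {i j : A} (hji : j ≠ i) (n : ℕ) :
    detProb M b n i ≤ 2 * tvDist (levelDist M b i n) (levelDist M b j n) := by
  unfold tvDist
  calc detProb M b n i
      = ∑ ω ∈ determining M b n i, |levelDist M b i n ω - levelDist M b j n ω| := by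
        refine sum_congr rfl fun ω hω => ?_
        rw [mem_determining.1 hω j hji, sub_zero, abs_of_nonneg (levelDist_nonneg hM₀ i n ω)]
    _ ≤ ∑ ω, |levelDist M b i n ω - levelDist M b j n ω| :=
        sum_le_sum_of_subset_of_nonneg (subset_univ _) fun _ _ _ => abs_nonneg _
    _ = 2 * (1 / 2 * ∑ ω, |levelDist M b i n ω - levelDist M b j n ω|) := by ring

lemma mem_determining_succ (hdiag : ∀ a, M a a = 0) {n : ℕ} {i : A}
    {τ : (Fin (n + 1) → Fin b) → A}
    (h : ∀ j ≠ i, ∃ k, subtree τ k ∈ determining M b n j) : τ ∈ determining M b (n + 1) i := by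
  refine mem_determining.2 fun c hc => ?_
  obtain ⟨k, hk⟩ := h c hc
  rw [levelDist_succ_eq_sum_prod]
  refine sum_eq_zero fun c' _ => ?_
  by_cases hck : c' k = c
  · exact mul_eq_zero_of_left (prod_eq_zero (mem_univ k) (by rw [hck, hdiag])) _
  · exact mul_eq_zero_of_right _ (prod_eq_zero (mem_univ k) (mem_determining.1 hk _ hck))

lemma sum_levelDist_subtrees_mem (i : A) (n : ℕ) (s : Finset ((Fin n → Fin b) → A)) :
    ∑ τ with ∀ k, subtree τ k ∈ s, levelDist M b i (n + 1) τ =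
      ∑ c : Fin b → A, (∏ k, M i (c k)) * ∏ k, ∑ ω ∈ s, levelDist M b (c k) n ω := by
  calc ∑ τ with ∀ k, subtree τ k ∈ s, levelDist M b i (n + 1) τ
      = ∑ τ : (Fin (n + 1) → Fin b) → A, ∑ c : Fin b → A, (∏ k, M i (c k)) *
          ∏ k, if subtree τ k ∈ s then levelDist M b (c k) n (subtree τ k) else 0 := by
        rw [sum_filter]
        refine sum_congr rfl fun τ _ => ?_
        simp_rw [levelDist_succ_eq_sum_prod, Fintype.prod_ite_zero]
        split_ifs <;> simp
    _ = ∑ c : Fin b → A, (∏ k, M i (c k)) * ∑ τ : (Fin (n + 1) → Fin b) → A,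
          ∏ k, if subtree τ k ∈ s then levelDist M b (c k) n (subtree τ k) else 0 := by
        rw [sum_comm]
        simp_rw [mul_sum]
    _ = _ := by
        refine sum_congr rfl fun c _ => congrArg _ ?_
        rw [sum_prod_subtree fun k ω => if ω ∈ s then levelDist M b (c k) n ω else 0]
        simp_rw [sum_ite_mem, univ_inter]

lemma sum_levelDist_subtrees_undetermined_le (hM₀ : ∀ a c, 0 ≤ M a c)
    (hM₁ : ∀ a, ∑ c, M a c = 1) {n : ℕ} {j : A} {p : ℝ} (hp : p ≤ detProb M b n j) (i : A) :
    ∑ τ with ∀ k, subtree τ k ∈ (determining M b n j)ᶜ, levelDist M b i (n + 1) τ ≤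
      (1 - p * M i j) ^ b := by
  have hfactor (a : A) : ∑ ω ∈ (determining M b n j)ᶜ, levelDist M b a n ω ≤
      1 - if a = j then p else 0 := by
    rw [sum_compl_levelDist hM₁]
    split_ifs with ha
    · subst ha
      exact sub_le_sub_left hp 1
    · simpa using sum_nonneg fun ω _ => levelDist_nonneg hM₀ a n ω
  rw [sum_levelDist_subtrees_mem]
  calc ∑ c : Fin b → A, (∏ k, M i (c k)) *
        ∏ k, ∑ ω ∈ (determining M b n j)ᶜ, levelDist M b (c k) n ω
      ≤ ∑ c : Fin b → A, (∏ k, M i (c k)) * ∏ k, (1 - if c k = j then p else 0) := by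
        refine sum_le_sum fun c _ => mul_le_mul_of_nonneg_left ?_ (prod_nonneg fun _ _ => hM₀ _ _)
        exact prod_le_prod (fun k _ => sum_nonneg fun ω _ => levelDist_nonneg hM₀ _ n ω)
          fun k _ => hfactor (c k)
    _ = (∑ a, M i a * (1 - if a = j then p else 0)) ^ b := by
        rw [Fintype.sum_pow]
        simp_rw [prod_mul_distrib]
    _ = (1 - p * M i j) ^ b := by
        simp [mul_sub, sum_sub_distrib, hM₁, mul_comm p]

theorem one_sub_sum_le_detProb_succ (hM₀ : ∀ a c, 0 ≤ M a c) (hM₁ : ∀ a, ∑ c, M a c = 1)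
    (hdiag : ∀ a, M a a = 0) {n : ℕ} {p : ℝ} (hp : ∀ j, p ≤ detProb M b n j) (i : A) :
    1 - ∑ j ∈ univ.erase i, (1 - p * M i j) ^ b ≤ detProb M b (n + 1) i := by
  have hcover : (determining M b (n + 1) i)ᶜ ⊆ (univ.erase i).biUnion fun j =>
      {τ | ∀ k, subtree τ k ∈ (determining M b n j)ᶜ} := by
    intro τ hτ
    have := mt (mem_determining_succ hdiag) (mem_compl.1 hτ)
    push Not at this
    obtain ⟨j, hji, hj⟩ := this
    simpa using ⟨j, hji, hj⟩
  have hnonneg := levelDist_nonneg (b := b) hM₀ i (n + 1)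
  have hbound := calc
    ∑ τ ∈ (determining M b (n + 1) i)ᶜ, levelDist M b i (n + 1) τ
      ≤ ∑ τ ∈ (univ.erase i).biUnion fun j => {τ | ∀ k, subtree τ k ∈ (determining M b n j)ᶜ},
          levelDist M b i (n + 1) τ :=
        sum_le_sum_of_subset_of_nonneg hcover fun τ _ _ => hnonneg τ
    _ ≤ ∑ j ∈ univ.erase i, ∑ τ with ∀ k, subtree τ k ∈ (determining M b n j)ᶜ,
          levelDist M b i (n + 1) τ :=
        sum_biUnion_le_sum_sum hnonneg _ _
    _ ≤ ∑ j ∈ univ.erase i, (1 - p * M i j) ^ b :=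
        sum_le_sum fun j _ => sum_levelDist_subtrees_undetermined_le hM₀ hM₁ (hp j) i
  rw [sum_compl_levelDist hM₁] at hbound
  unfold detProb
  linarith

theorem le_detProb (hM₀ : ∀ a c, 0 ≤ M a c) (hM₁ : ∀ a, ∑ c, M a c = 1)
    (hdiag : ∀ a, M a a = 0) {p : ℝ} (hp₁ : p ≤ 1)
    (hfix : ∀ i, p ≤ 1 - ∑ j ∈ univ.erase i, (1 - p * M i j) ^ b) :
    ∀ n j, p ≤ detProb M b n j
  | 0, j => by rw [detProb_zero]; exact hp₁
  | n + 1, j =>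
    (hfix j).trans <|
      one_sub_sum_le_detProb_succ hM₀ hM₁ hdiag (le_detProb hM₀ hM₁ hdiag hp₁ hfix n) j

theorem exists_pos_tendsto_tvDist (hM₀ : ∀ a c, 0 ≤ M a c) (hM₁ : ∀ a, ∑ c, M a c = 1)
    {i j : A} (hji : j ≠ i) {p : ℝ} (hp : 0 < p) (hpn : ∀ n, p ≤ detProb M b n i) :
    ∃ L > 0, Tendsto (fun n => tvDist (levelDist M b i n) (levelDist M b j n)) atTop (nhds L) := by
  have hanti : Antitone fun n => tvDist (levelDist M b i n) (levelDist M b j n) :=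
    antitone_nat_of_succ_le fun n => tvDist_levelDist_succ_le hM₀ hM₁ i j n
  have hlow (n : ℕ) : p / 2 ≤ tvDist (levelDist M b i n) (levelDist M b j n) := by
    linarith [hpn n, detProb_le_two_mul_tvDist (b := b) hM₀ hji n]
  exact ⟨_, (half_pos hp).trans_le (le_ciInf hlow),
    tendsto_atTop_ciInf hanti ⟨0, Set.forall_mem_range.2 fun n => tvDist_nonneg _ _⟩⟩

end Broadcast

section Coloring

variable {q : ℕ}

lemma coloring_nonneg (i j : Fin q) : 0 ≤ coloring q i j := by
  have : (1 : ℝ) ≤ q := by exact_mod_cast i.pos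
  unfold coloring
  split_ifs
  · rfl
  · exact inv_nonneg.2 (by linarith)

lemma coloring_self (i : Fin q) : coloring q i i = 0 := if_pos rfl

lemma coloring_of_ne {i j : Fin q} (h : i ≠ j) : coloring q i j = ((q : ℝ) - 1)⁻¹ := if_neg h

lemma sum_erase_comp_coloring (i : Fin q) (f : ℝ → ℝ) :
    ∑ j ∈ univ.erase i, f (coloring q i j) = ((q : ℝ) - 1) * f ((q : ℝ) - 1)⁻¹ := by
  rw [sum_congr rfl fun j hj => by rw [coloring_of_ne (mem_erase.1 hj).1.symm], sum_const,
    card_erase_of_mem (mem_univ i), card_univ, Fintype.card_fin, nsmul_eq_mul,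
    Nat.cast_pred i.pos]

lemma sum_coloring (hq : 2 ≤ q) (i : Fin q) : ∑ j, coloring q i j = 1 := by
  have : (q : ℝ) - 1 ≠ 0 := by
    have : (2 : ℝ) ≤ q := by exact_mod_cast hq
    linarith
  rw [← add_sum_erase _ _ (mem_univ i), coloring_self, zero_add]
  exact (sum_erase_comp_coloring i id).trans (mul_inv_cancel₀ this)

end Coloring

lemma eventually_pred_mul_one_sub_pow_le {δ p : ℝ} (hp₀ : 0 ≤ p) (hp₁ : p < 1)
    (hδp : 1 < (1 + δ) * p) :
    ∀ᶠ q : ℕ in atTop, ∀ b : ℕ, (1 + δ) * q * Real.log q ≤ b →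
      ((q : ℝ) - 1) * (1 - p * ((q : ℝ) - 1)⁻¹) ^ b ≤ 1 - p := by
  set ε := (1 + δ) * p - 1
  have hlim : Tendsto (fun q : ℕ => Real.exp (-(ε * Real.log q))) atTop (nhds 0) :=
    Real.tendsto_exp_neg_atTop_nhds_zero.comp
      ((Real.tendsto_log_atTop.comp tendsto_natCast_atTop_atTop).const_mul_atTop (by linarith))
  filter_upwards [hlim.eventually (gt_mem_nhds (sub_pos.2 hp₁)), eventually_ge_atTop 2]
    with q hq hq2 b hb
  have hq1 : (1 : ℝ) ≤ q - 1 := by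
    have : (2 : ℝ) ≤ q := by exact_mod_cast hq2
    linarith
  have hlog : 0 ≤ Real.log q := Real.log_nonneg (by linarith)
  set x := p * ((q : ℝ) - 1)⁻¹
  have hx₀ : 0 ≤ x := mul_nonneg hp₀ (inv_nonneg.2 (by linarith))
  have hx₁ : x ≤ 1 := by
    simp only [x]
    rw [← div_eq_mul_inv, div_le_one (by linarith)]
    linarith
  have hbx : (1 + ε) * Real.log q ≤ b * x :=
    calc (1 + ε) * Real.log q ≤ (1 + ε) * Real.log q * (q / (q - 1)) :=
          le_mul_of_one_le_right (by nlinarith) ((one_le_div (by linarith)).2 (by linarith))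
      _ = (1 + δ) * q * Real.log q * x := by
          simp only [ε, x]
          field_simp
          ring
      _ ≤ b * x := mul_le_mul_of_nonneg_right hb hx₀
  calc ((q : ℝ) - 1) * (1 - x) ^ b ≤ q * Real.exp (-x) ^ b :=
        mul_le_mul (by linarith) (pow_le_pow_left₀ (by linarith) (Real.one_sub_le_exp_neg x) b)
          (pow_nonneg (by linarith) b) (by linarith)
    _ = Real.exp (Real.log q) * Real.exp (-(b * x)) := by
        rw [Real.exp_log (by linarith), ← Real.exp_nat_mul]
        ring_nf
    _ ≤ Real.exp (Real.log q) * Real.exp (-((1 + ε) * Real.log q)) := by gcongr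
    _ = Real.exp (-(ε * Real.log q)) := by
        rw [← Real.exp_add]
        ring_nf
    _ ≤ 1 - p := hq.le

/-- For every `δ > 0`, for all sufficiently large `q` and all
`b ≥ (1+δ) q log q`, the reconstruction problem for the `b`-ary tree and the
`q`-coloring channel is solvable. -/
theorem coloring_solvable (δ : ℝ) (hδ : 0 < δ) :
    ∃ q₀ : ℕ, ∀ q : ℕ, q₀ ≤ q → ∀ b : ℕ,
      (1 + δ) * (q : ℝ) * Real.log q ≤ (b : ℝ) →
      ∃ i j : Fin q, ∃ L > 0, Tendsto
        (fun n => tvDist (levelDist (coloring q) b i n) (levelDist (coloring q) b j n))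
        atTop (nhds L) := by
  set p := (1 + δ / 2) / (1 + δ)
  have hp₀ : 0 < p := by positivity
  have hp₁ : p < 1 := (div_lt_one (by linarith)).2 (by linarith)
  have hδp : 1 < (1 + δ) * p := by
    rw [mul_div_cancel₀ _ (by linarith : (1 : ℝ) + δ ≠ 0)]
    linarith
  obtain ⟨q₀, hq₀⟩ := eventually_atTop.1
    ((eventually_pred_mul_one_sub_pow_le hp₀.le hp₁ hδp).and (eventually_ge_atTop 2))
  refine ⟨q₀, fun q hq b hb => ?_⟩
  obtain ⟨hfix, hq2⟩ := hq₀ q hq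
  have hdet : ∀ n j, p ≤ detProb (coloring q) b n j :=
    le_detProb coloring_nonneg (sum_coloring hq2) coloring_self hp₁.le fun i => by
      rw [sum_erase_comp_coloring i fun t => (1 - p * t) ^ b]
      linarith [hfix b hb]
  exact ⟨⟨0, by omega⟩, ⟨1, by omega⟩, exists_pos_tendsto_tvDist coloring_nonneg
    (sum_coloring hq2) (by simp [Fin.ext_iff]) hp₀ fun n => hdet n _⟩
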